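/- arXiv:1707.06855 — 4 statements merged into one kernel-verified Lean document; each statement's English description precedes it below -/
import Mathlib

section
/- Let $n,\ell\ge 2$ with $\ell \le n$, and for each $i\in\mathbb{Z}_n$ let $s_i,t_i\in\mathbb{N}_0$ satisfy $t_i + s_{i+1} = \ell-1$ (indices mod $n$) and $s_i + t_i \le \ell$. Define cyclic intervals $\bar{w}_i := [i+s_i, i+\ell-t_i) \subseteq \mathbb{Z}_n$ (possibly empty). Then $\{\bar{w}_i : i\in\mathbb{Z}_n\}$ is a partition of $\mathbb{Z}_n$ (i.e., every element of $\mathbb{Z}_n$ lies in exactly one $\bar{w}_i$). -/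
/-- The cyclic intervals `w̄ᵢ = [i+sᵢ, i+ℓ-tᵢ)` partition `ℤₙ`. -/
theorem stmt_2 (n ℓ : ℕ) (hn : 2 ≤ n) (hℓ : 2 ≤ ℓ) (hln : ℓ ≤ n)
    (s t : ZMod n → ℕ)
    (hst : ∀ i : ZMod n, t i + s (i + 1) = ℓ - 1)
    (hcap : ∀ i : ZMod n, s i + t i ≤ ℓ)
    (barw : ZMod n → Finset (ZMod n))
    (hbarw : ∀ i : ZMod n,
      barw i = (Finset.Ico (s i) (ℓ - t i)).image (fun p : ℕ => (i + (p : ZMod n)))) :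
    ∀ x : ZMod n, ∃! i : ZMod n, x ∈ barw i := by
  haveI : NeZero n := ⟨by omega⟩
  have hstep : ∀ j : ZMod n, s j ≤ s (j + 1) + 1 := by
    intro j
    have h1 := hst j
    have h2 := hcap j
    omega
  have hbound : ∀ j : ZMod n, s j ≤ ℓ - 1 := by
    intro j
    have h := hst (j - 1)
    have : j - 1 + 1 = j := by ring
    rw [this] at h
    omega
  have hend : ∀ j : ZMod n, ℓ - t j = s (j + 1) + 1 := by
    intro j; have := hst j; omega
  intro x
  have hex : ∃ k : ℕ, s (x - (k : ℕ)) ≤ k := ⟨ℓ - 1, hbound _⟩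
  set K := Nat.find hex with hK
  have hKspec : s (x - (K : ℕ)) ≤ K := Nat.find_spec hex
  have hchain : ∀ d : ℕ, s (x - ((K + d : ℕ) : ZMod n)) ≤ K + d := by
    intro d
    induction d with
    | zero => simpa using hKspec
    | succ d ih =>
        show s (x - ((K + d + 1 : ℕ) : ZMod n)) ≤ K + d + 1
        have h := hstep (x - ((K + d + 1 : ℕ) : ZMod n))
        have harith : x - ((K + d + 1 : ℕ) : ZMod n) + 1 = x - ((K + d : ℕ) : ZMod n) := by
          push_cast; ring
        rw [harith] at h
        omega
  refine ⟨x - (K : ℕ), ?_, ?_⟩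
  · show x ∈ barw (x - (K : ℕ))
    rw [hbarw]
    refine Finset.mem_image.2 ⟨K, Finset.mem_Ico.2 ⟨hKspec, ?_⟩, by simp⟩
    rw [hend]
    rcases Nat.eq_zero_or_pos K with h0 | h0
    · omega
    · have hmin : ¬ s (x - ((K - 1 : ℕ) : ZMod n)) ≤ K - 1 := Nat.find_min hex (by omega)
      have harith : x - ((K : ℕ) : ZMod n) + 1 = x - ((K - 1 : ℕ) : ZMod n) := by
        have h : (K : ℕ) = (K - 1) + 1 := by omega
        rw [h]; push_cast; ring
      rw [harith]
      omega
  · intro j hj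
    rw [hbarw] at hj
    obtain ⟨p, hp, hjp⟩ := Finset.mem_image.1 hj
    rw [Finset.mem_Ico] at hp
    obtain ⟨hp1, hp2⟩ := hp
    rw [hend] at hp2
    have hpℓ : p ≤ ℓ - 1 := by have := hbound (j + 1); omega
    have hjx : j = x - (p : ℕ) := by rw [← hjp]; ring
    have hPp : s (x - ((p : ℕ) : ZMod n)) ≤ p := by rw [← hjx]; exact hp1
    have hKp : K ≤ p := Nat.find_min' hex hPp
    rcases Nat.lt_or_ge K p with hlt | hge
    · exfalso
      have hc := hchain (p - 1 - K)
      have heq : K + (p - 1 - K) = p - 1 := by omega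
      rw [heq] at hc
      have harith : x - ((p - 1 : ℕ) : ZMod n) = j + 1 := by
        rw [hjx]
        have h : (p : ℕ) = (p - 1) + 1 := by omega
        rw [h]; push_cast; ring
      rw [harith] at hc
      omega
    · have hpk : p = K := by omega
      rw [hjx, hpk]
end

section
/- Fix $n, \ell \ge 2$ with $\ell \mid n$ and $k\ge 2$, and a family of $k$-element multisets $e_1,\dots,e_m$ over $\mathbb{Z}_{n/\ell}$. Define the hypergraph $B$ on vertex set $\mathbb{Z}_n$ with edges $e_i' := \bigcup_{j\in e_i}[j\ell,(j+1)\ell)$, where each vertex has capacity 1 and each edge has demand 1, and the weighted hypergraph $\hat{B}$ on vertex set $\mathbb{Z}_{n/\ell}$ with edges $e_1,\dots,e_m$, vertex weights $\ell$ and edge weights 1. Then $B$ is orientable if and only if $\hat{B}$ is orientable. -/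
/-- A weighted hypergraph (with edges indexed by a fintype `E`, vertex weights `ηV`
and edge weights `ηE`) is orientable. -/
def Orientable {V E : Type*} [Fintype E] [DecidableEq V]
    (edge : E → Finset V) (ηV : V → ℕ) (ηE : E → ℕ) : Prop :=
  ∃ μ : E → V → ℕ,
    (∀ e, ∑ v ∈ edge e, μ e v = ηE e) ∧
    (∀ v, ∑ e, (if v ∈ edge e then μ e v else 0) ≤ ηV v)

section Aux

/-- The block of vertices in `ZMod n` corresponding to a vertex `j` of `ZMod (n/ℓ)`. -/
def blockF (n ℓ : ℕ) (j : ZMod (n / ℓ)) : Finset (ZMod n) :=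
  (Finset.Ico (j.val * ℓ) (j.val * ℓ + ℓ)).image (fun x : ℕ => (x : ZMod n))

variable {n ℓ : ℕ}

lemma block_bound (hn : 2 ≤ n) (hℓ : 2 ≤ ℓ) (hdvd : ℓ ∣ n) (j : ZMod (n / ℓ)) :
    j.val * ℓ + ℓ ≤ n := by
  haveI : NeZero (n / ℓ) :=
    ⟨by have := Nat.div_pos (Nat.le_of_dvd (by omega) hdvd) (by omega); omega⟩
  have h1 : j.val < n / ℓ := ZMod.val_lt j
  calc j.val * ℓ + ℓ = (j.val + 1) * ℓ := by ring
    _ ≤ (n / ℓ) * ℓ := Nat.mul_le_mul_right _ h1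
    _ = n := Nat.div_mul_cancel hdvd

lemma mem_blockF (hn : 2 ≤ n) (hℓ : 2 ≤ ℓ) (hdvd : ℓ ∣ n) (j : ZMod (n / ℓ))
    (v : ZMod n) : v ∈ blockF n ℓ j ↔ j.val * ℓ ≤ v.val ∧ v.val < j.val * ℓ + ℓ := by
  haveI : NeZero n := ⟨by omega⟩
  constructor
  · rintro hv
    rcases Finset.mem_image.mp hv with ⟨x, hx, rfl⟩
    rw [Finset.mem_Ico] at hx
    rw [ZMod.val_cast_of_lt (lt_of_lt_of_le hx.2 (block_bound hn hℓ hdvd j))]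
    exact hx
  · intro hv
    refine Finset.mem_image.mpr ⟨v.val, Finset.mem_Ico.mpr hv, ?_⟩
    exact ZMod.natCast_rightInverse v

lemma card_blockF (hn : 2 ≤ n) (hℓ : 2 ≤ ℓ) (hdvd : ℓ ∣ n) (j : ZMod (n / ℓ)) :
    (blockF n ℓ j).card = ℓ := by
  haveI : NeZero n := ⟨by omega⟩
  rw [blockF, Finset.card_image_of_injOn, Nat.card_Ico]
  · omega
  · intro x hx y hy hxy
    simp only [Finset.mem_coe, Finset.mem_Ico] at hx hy
    have hb := block_bound hn hℓ hdvd j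
    have hx' : x < n := by omega
    have hy' : y < n := by omega
    have := congrArg ZMod.val hxy
    rwa [ZMod.val_cast_of_lt hx', ZMod.val_cast_of_lt hy'] at this

lemma disj_blockF (hn : 2 ≤ n) (hℓ : 2 ≤ ℓ) (hdvd : ℓ ∣ n) {j j' : ZMod (n / ℓ)}
    (hjj : j ≠ j') : Disjoint (blockF n ℓ j) (blockF n ℓ j') := by
  haveI : NeZero (n / ℓ) :=
    ⟨by have := Nat.div_pos (Nat.le_of_dvd (by omega) hdvd) (by omega); omega⟩
  rw [Finset.disjoint_left]
  intro v hv hv'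
  rw [mem_blockF hn hℓ hdvd] at hv hv'
  have h1 : v.val / ℓ = j.val := Nat.div_eq_of_lt_le hv.1 (by
    simpa [Nat.succ_mul] using hv.2)
  have h2 : v.val / ℓ = j'.val := Nat.div_eq_of_lt_le hv'.1 (by
    simpa [Nat.succ_mul] using hv'.2)
  exact hjj (ZMod.val_injective _ (h1 ▸ h2))

end Aux

/-- `B` (blocks of size ℓ, unit capacities) is orientable iff the
contracted weighted hypergraph `B̂` (vertex weight ℓ) is orientable. -/
theorem stmt_3 (n ℓ k m : ℕ) (hn : 2 ≤ n) (hℓ : 2 ≤ ℓ) (hk : 2 ≤ k) (hdvd : ℓ ∣ n)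
    (e : Fin m → Multiset (ZMod (n / ℓ)))
    (hcard : ∀ i, Multiset.card (e i) = k) :
    Orientable (V := ZMod n)
      (fun i : Fin m => (e i).toFinset.biUnion (fun j =>
        (Finset.Ico (j.val * ℓ) (j.val * ℓ + ℓ)).image (fun x : ℕ => (x : ZMod n))))
      (fun _ => 1) (fun _ => 1)
    ↔ Orientable (V := ZMod (n / ℓ))
        (fun i : Fin m => (e i).toFinset)
        (fun _ => ℓ) (fun _ => 1) := by
  haveI : NeZero n := ⟨by omega⟩
  haveI : NeZero (n / ℓ) :=
    ⟨by have := Nat.div_pos (Nat.le_of_dvd (by omega) hdvd) (by omega); omega⟩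
  have hE : (fun i : Fin m => (e i).toFinset.biUnion (fun j =>
      (Finset.Ico (j.val * ℓ) (j.val * ℓ + ℓ)).image (fun x : ℕ => (x : ZMod n))))
      = fun i : Fin m => (e i).toFinset.biUnion (blockF n ℓ) := rfl
  rw [hE]
  set edge' : Fin m → Finset (ZMod n) := fun i => (e i).toFinset.biUnion (blockF n ℓ)
    with hedge'
  constructor
  · rintro ⟨μ, h1, h2⟩
    refine ⟨fun i j => ∑ v ∈ blockF n ℓ j, if v ∈ edge' i then μ i v else 0, ?_, ?_⟩
    · intro i
      have hpd : ((e i).toFinset : Set (ZMod (n / ℓ))).PairwiseDisjoint (blockF n ℓ) :=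
        fun a _ b _ hab => disj_blockF hn hℓ hdvd hab
      rw [← Finset.sum_biUnion hpd]
      calc ∑ v ∈ edge' i, (if v ∈ edge' i then μ i v else 0)
          = ∑ v ∈ edge' i, μ i v := Finset.sum_congr rfl (fun v hv => if_pos hv)
        _ = 1 := h1 i
    · intro j
      calc ∑ i, (if j ∈ (e i).toFinset then
              ∑ v ∈ blockF n ℓ j, (if v ∈ edge' i then μ i v else 0) else 0)
          ≤ ∑ i, ∑ v ∈ blockF n ℓ j, (if v ∈ edge' i then μ i v else 0) := by
            refine Finset.sum_le_sum fun i _ => ?_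
            split <;> simp
        _ = ∑ v ∈ blockF n ℓ j, ∑ i, (if v ∈ edge' i then μ i v else 0) := Finset.sum_comm
        _ ≤ ∑ v ∈ blockF n ℓ j, 1 := Finset.sum_le_sum (fun v _ => h2 v)
        _ = ℓ := by rw [Finset.sum_const, smul_eq_mul, mul_one, card_blockF hn hℓ hdvd]
  · rintro ⟨ν, h1, h2⟩
    have hex : ∀ i, ∃ j ∈ (e i).toFinset, ν i j ≠ 0 := fun i =>
      Finset.exists_ne_zero_of_sum_ne_zero (by rw [h1 i]; exact one_ne_zero)
    choose f hf1 hf2 using hex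
    have hfib : ∀ j : ZMod (n / ℓ), (Finset.univ.filter fun i => f i = j).card ≤ ℓ := by
      intro j
      calc (Finset.univ.filter fun i => f i = j).card
          = ∑ i, (if f i = j then 1 else 0) := Finset.card_filter _ _
        _ ≤ ∑ i, (if j ∈ (e i).toFinset then ν i j else 0) := by
            refine Finset.sum_le_sum fun i _ => ?_
            by_cases h : f i = j
            · rw [if_pos h, if_pos (h ▸ hf1 i)]
              have := hf2 i; subst h; omega
            · simp [h]
        _ ≤ ℓ := h2 j
    set r : Fin m → ℕ := fun i => (Finset.univ.filter fun i' => f i' = f i ∧ i' < i).card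
      with hr
    have hrlt : ∀ i, r i < ℓ := by
      intro i
      have hsub : (Finset.univ.filter fun i' => f i' = f i ∧ i' < i) ⊆
          (Finset.univ.filter fun i' => f i' = f i) := by
        intro x hx
        simp only [Finset.mem_filter, Finset.mem_univ, true_and] at hx ⊢
        exact hx.1
      have hss : (Finset.univ.filter fun i' => f i' = f i ∧ i' < i) ⊂
          (Finset.univ.filter fun i' => f i' = f i) :=
        (Finset.ssubset_iff_of_subset hsub).mpr ⟨i, by simp, by simp⟩
      exact lt_of_lt_of_le (Finset.card_lt_card hss) (hfib (f i))
    have hmono : ∀ i i' : Fin m, f i = f i' → i < i' → r i < r i' := by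
      intro i i' hfe hlt
      apply Finset.card_lt_card
      have hsub : (Finset.univ.filter fun x => f x = f i ∧ x < i) ⊆
          (Finset.univ.filter fun x => f x = f i' ∧ x < i') := by
        intro x hx
        simp only [Finset.mem_filter, Finset.mem_univ, true_and] at hx ⊢
        exact ⟨hx.1.trans hfe, hx.2.trans hlt⟩
      exact (Finset.ssubset_iff_of_subset hsub).mpr
        ⟨i, by simp [hfe.symm, hlt], by simp⟩
    set g : Fin m → ZMod n := fun i => (((f i).val * ℓ + r i : ℕ) : ZMod n) with hg
    have hglt : ∀ i, (f i).val * ℓ + r i < n := fun i =>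
      lt_of_lt_of_le (by have := hrlt i; omega) (block_bound hn hℓ hdvd (f i))
    have hgmem : ∀ i, g i ∈ blockF n ℓ (f i) := fun i =>
      Finset.mem_image.mpr ⟨(f i).val * ℓ + r i,
        Finset.mem_Ico.mpr ⟨Nat.le_add_right _ _, by have := hrlt i; omega⟩, rfl⟩
    have hginj : Function.Injective g := by
      intro i i' hii
      have hnat : (f i).val * ℓ + r i = (f i').val * ℓ + r i' := by
        have h := congrArg ZMod.val hii
        rwa [hg, ZMod.val_cast_of_lt (hglt i), ZMod.val_cast_of_lt (hglt i')] at h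
      have e1 : ((f i).val * ℓ + r i) / ℓ = (f i).val :=
        Nat.div_eq_of_lt_le (Nat.le_add_right _ _)
          (by simp only [Nat.succ_mul]; have := hrlt i; omega)
      have e2 : ((f i').val * ℓ + r i') / ℓ = (f i').val :=
        Nat.div_eq_of_lt_le (Nat.le_add_right _ _)
          (by simp only [Nat.succ_mul]; have := hrlt i'; omega)
      have hfe : (f i).val = (f i').val := by rw [← e1, ← e2, hnat]
      have hfeq : f i = f i' := ZMod.val_injective _ hfe
      have hre : r i = r i' := by
        rw [hfeq] at hnat; exact Nat.add_left_cancel hnat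
      by_contra hne
      rcases lt_or_gt_of_ne hne with h | h
      · exact absurd hre (Nat.ne_of_lt (hmono i i' hfeq h))
      · exact absurd hre.symm (Nat.ne_of_lt (hmono i' i hfeq.symm h))
    refine ⟨fun i v => if v = g i then 1 else 0, ?_, ?_⟩
    · intro i
      rw [Finset.sum_ite_eq' (edge' i) (g i) (fun _ => 1),
        if_pos (Finset.mem_biUnion.mpr ⟨f i, hf1 i, hgmem i⟩)]
    · intro v
      calc ∑ i, (if v ∈ edge' i then (if v = g i then 1 else 0) else 0)
          ≤ ∑ i, (if v = g i then 1 else 0) := by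
            refine Finset.sum_le_sum fun i _ => ?_
            split <;> simp
        _ = (Finset.univ.filter fun i => v = g i).card := (Finset.card_filter _ _).symm
        _ ≤ 1 := Finset.card_le_one.mpr fun a ha b hb => hginj
            (((Finset.mem_filter.mp ha).2.symm.trans (Finset.mem_filter.mp hb).2))
end

section
/- Fix $n \ge \ell \ge 2$ and a family of $k$-element multisets $e_1,\dots,e_m$ over $\mathbb{Z}_n$. Let $W$ be the hypergraph on $\mathbb{Z}_n$ with edges $e_i' := \bigcup_{j\in e_i}[j,j+\ell)$ (cyclic windows), unit vertex capacities and unit edge demands. Let $\hat{W}$ be the weighted hypergraph on $\mathbb{Z}_n$ with ordinary edges $e_1,\dots,e_m$ of weight 1, helper edges $c_i = \{i,i+1\}$ for $i\in\mathbb{Z}_n$ of weight $\ell-1$, and vertex weights $\ell$. Then $W$ is orientable if and only if $\hat{W}$ is orientable. -/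
/-!
With unit demands and capacities, an orientation of `W` is a system of distinct representatives
`ρ i`, each at cyclic distance `< ℓ` after some `w i ∈ e i`. An orientation of `Ŵ` sends each
ordinary edge to some `w i ∈ e i`, and the share `c v` that the helper edge `{v - 1, v}` puts on `v`
behaves like a carry: `v` receives the `#{i | w i = v}` points over it plus `c v` carried in, keeps
at most one, and passes the rest to `v + 1`, never carrying more than `ℓ - 1` across a boundary.
Representatives give a carry by counting the arcs `w i → ρ i` entering `v`; conversely a carry
lets the points over `v` be parked consecutively from `v + c v` on.
-/

open Finset Function

theorem ZMod.val_add_one_of_lt {n : ℕ} [NeZero n] {x : ZMod n} (h : x.val + 1 < n) :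
    (x + 1).val = x.val + 1 := by
  conv_lhs => rw [← ZMod.natCast_zmod_val x]
  rw [← Nat.cast_succ, ZMod.val_cast_of_lt h]

theorem ZMod.natCast_injOn_Ico {n : ℕ} (s : ℕ) :
    Set.InjOn (Nat.cast : ℕ → ZMod n) (Set.Ico s (s + n)) := by
  intro a ha b hb hab
  simp only [Set.mem_Ico] at ha hb
  exact ((ZMod.natCast_eq_natCast_iff a b n).1 hab).eq_of_abs_lt (by rw [abs_lt]; omega)

theorem ZMod.sum_ite_mem_pair_add_one {n : ℕ} [Fact (1 < n)] {M : Type*} [AddCommMonoid M]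
    (g : ZMod n → M) (v : ZMod n)
    [DecidablePred fun j : ZMod n => v ∈ ({j, j + 1} : Finset (ZMod n))] :
    ∑ j, (if v ∈ ({j, j + 1} : Finset (ZMod n)) then g j else 0) = g (v - 1) + g v := by
  have hfilter : ({j | v ∈ ({j, j + 1} : Finset (ZMod n))} : Finset (ZMod n)) = {v - 1, v} := by
    ext j
    simp only [mem_filter, mem_univ, true_and, mem_insert, mem_singleton, eq_sub_iff_add_eq]
    tauto
  rw [← sum_filter, hfilter, sum_pair fun h => one_ne_zero (sub_eq_self.1 h)]

theorem ZMod.mem_image_range_add_iff {n : ℕ} [NeZero n] {ℓ : ℕ} (hℓ : ℓ ≤ n) (j v : ZMod n) :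
    v ∈ (range ℓ).image (fun p : ℕ => j + (p : ZMod n)) ↔ (v - j).val < ℓ := by
  simp only [mem_image, mem_range]
  constructor
  · rintro ⟨p, hp, rfl⟩
    rwa [add_sub_cancel_left, ZMod.val_cast_of_lt (hp.trans_le hℓ)]
  · exact fun h => ⟨_, h, by rw [ZMod.natCast_zmod_val, add_sub_cancel]⟩

section

variable {ι : Type*} [Fintype ι]

theorem orientable_unit_iff {V : Type*} [DecidableEq V] (edge : ι → Finset V) :
    Orientable edge (fun _ => 1) (fun _ => 1) ↔ ∃ ρ : ι → V, Injective ρ ∧ ∀ i, ρ i ∈ edge i := by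
  classical
  constructor
  · rintro ⟨μ, hdem, hcap⟩
    choose ρ hρ hρμ using fun i =>
      exists_ne_zero_of_sum_ne_zero ((hdem i).trans_ne one_ne_zero)
    refine ⟨ρ, fun i j hij => by_contra fun hne => ?_, hρ⟩
    have hload := sum_le_sum_of_subset (f := fun k => if ρ i ∈ edge k then μ k (ρ i) else 0)
      (subset_univ {i, j})
    rw [sum_pair hne, if_pos (hρ i), if_pos (hij ▸ hρ j), hij] at hload
    have hi := hρμ i
    rw [hij] at hi
    have : _ ≤ 1 := hcap (ρ j)
    have := hρμ j
    omega
  · rintro ⟨ρ, hρ, hmem⟩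
    refine ⟨fun i v => if v = ρ i then 1 else 0, fun i => by simp [hmem i], fun v => ?_⟩
    calc ∑ i, (if v ∈ edge i then (if v = ρ i then 1 else 0) else 0)
        ≤ ∑ i, (if v = ρ i then 1 else 0) := sum_le_sum fun i _ => by split_ifs <;> simp
      _ = #{i | v = ρ i} := sum_boole _ _
      _ ≤ 1 := card_le_one.2 fun i hi j hj => hρ (by simp_all)

theorem orientable_sumElim_iff {V κ : Type*} [Fintype κ] [DecidableEq V]
    (edge₁ : ι → Finset V) (edge₂ : κ → Finset V) (ηV : V → ℕ) (η₁ : ι → ℕ) (η₂ : κ → ℕ) :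
    Orientable (Sum.elim edge₁ edge₂) ηV (Sum.elim η₁ η₂) ↔
      ∃ (μ₁ : ι → V → ℕ) (μ₂ : κ → V → ℕ), (∀ i, ∑ v ∈ edge₁ i, μ₁ i v = η₁ i) ∧
        (∀ j, ∑ v ∈ edge₂ j, μ₂ j v = η₂ j) ∧
        ∀ v, (∑ i, if v ∈ edge₁ i then μ₁ i v else 0) +
          (∑ j, if v ∈ edge₂ j then μ₂ j v else 0) ≤ ηV v := by
  constructor
  · rintro ⟨μ, hdem, hcap⟩
    exact ⟨fun i => μ (.inl i), fun j => μ (.inr j), fun i => hdem (.inl i),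
      fun j => hdem (.inr j), fun v => (Fintype.sum_sum_type _).symm.trans_le (hcap v)⟩
  · rintro ⟨μ₁, μ₂, hdem₁, hdem₂, hcap⟩
    exact ⟨Sum.elim μ₁ μ₂, Sum.forall.2 ⟨hdem₁, hdem₂⟩,
      fun v => (Fintype.sum_sum_type _).trans_le (hcap v)⟩

variable {n : ℕ}

def IsCarry (ℓ : ℕ) (w : ι → ZMod n) (c : ZMod n → ℕ) : Prop :=
  (∀ v, c v ≤ ℓ - 1) ∧ ∀ v, #{i | w i = v} + c v ≤ 1 + c (v + 1)

theorem orientable_helper_iff [Fact (1 < n)] {ℓ : ℕ} (hℓ : 0 < ℓ) (edge : ι → Finset (ZMod n)) :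
    Orientable (E := ι ⊕ ZMod n) (Sum.elim edge fun j => {j, j + 1}) (fun _ => ℓ)
        (Sum.elim (fun _ => 1) fun _ => ℓ - 1) ↔
      ∃ w : ι → ZMod n, (∀ i, w i ∈ edge i) ∧ ∃ c, IsCarry ℓ w c := by
  have hpair (j : ZMod n) : j ≠ j + 1 := fun h => one_ne_zero (left_eq_add.1 h)
  rw [orientable_sumElim_iff]
  simp only [ZMod.sum_ite_mem_pair_add_one]
  constructor
  · rintro ⟨μ, ν, hdem, hhelper, hcap⟩
    choose w hw hwμ using fun i => exists_ne_zero_of_sum_ne_zero ((hdem i).trans_ne one_ne_zero)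
    replace hhelper (j : ZMod n) : ν j j + ν j (j + 1) = ℓ - 1 := by
      simpa [sum_pair (hpair j)] using hhelper j
    refine ⟨w, hw, fun v => ν (v - 1) v, fun v => ?_, fun v => ?_⟩
    · have := hhelper (v - 1)
      rw [sub_add_cancel] at this
      show ν _ v ≤ _
      omega
    · have hfib : #{i | w i = v} ≤ ∑ i, if v ∈ edge i then μ i v else 0 := by
        rw [card_filter]
        refine sum_le_sum fun i _ => ?_
        split_ifs with hwv hmem
        · exact Nat.one_le_iff_ne_zero.2 (hwv ▸ hwμ i)
        · exact absurd (hwv ▸ hw i) hmem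
        all_goals exact Nat.zero_le _
      have := hcap v
      have := hhelper v
      show _ + ν _ v ≤ 1 + ν _ (v + 1)
      rw [add_sub_cancel_right]
      omega
  · rintro ⟨w, hw, c, hcℓ, hbal⟩
    refine ⟨fun i v => if v = w i then 1 else 0,
      fun j v => if v = j + 1 then c (j + 1) else if v = j then ℓ - 1 - c (j + 1) else 0,
      fun i => by simp [hw i], fun j => ?_, fun v => ?_⟩
    · simp [sum_pair (hpair j), Nat.sub_add_cancel (hcℓ (j + 1))]
    · have hfib : (∑ i, if v ∈ edge i then (if v = w i then 1 else 0) else 0) ≤ #{i | w i = v} := by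
        rw [card_filter]
        exact sum_le_sum fun i _ => by split_ifs <;> first | omega | exact absurd ‹v = w i›.symm ‹_›
      simp only [sub_add_cancel, if_true, if_neg (hpair v)]
      have := hbal v
      have := hcℓ (v + 1)
      omega

theorem exists_isCarry_of_injective [NeZero n] {ℓ : ℕ} (w ρ : ι → ZMod n) (hρ : Injective ρ)
    (hwin : ∀ i, (ρ i - w i).val < ℓ) : ∃ c, IsCarry ℓ w c := by
  classical
  let arcsInto (v : ZMod n) : Finset ι := {i | 0 < (v - w i).val ∧ (v - w i).val ≤ (ρ i - w i).val}
  refine ⟨fun v => #(arcsInto v), fun v => ?_, fun v => ?_⟩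
  · calc #(arcsInto v) ≤ #(range (ℓ - 1)) := by
          refine card_le_card_of_injOn (fun i => (ρ i - v).val) (fun i hi => ?_) fun i _ j _ h => ?_
          · simp only [arcsInto, coe_filter, mem_univ, true_and, Set.mem_ofPred_eq] at hi
            have hsub : ρ i - v = (ρ i - w i) - (v - w i) := by ring
            simp only [coe_range, Set.mem_Iio, hsub, ZMod.val_sub hi.2]
            have := hwin i
            omega
          · exact hρ (sub_left_inj.1 (ZMod.val_injective n h))
      _ = ℓ - 1 := card_range _
  · have hdisj : Disjoint ({i | w i = v} : Finset ι) (arcsInto v) := by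
      refine disjoint_filter.2 fun i _ hwv h => ?_
      simp [hwv] at h
    have hsub : ({i | w i = v} : Finset ι) ∪ arcsInto v ⊆
        ({i | ρ i = v} : Finset ι) ∪ arcsInto (v + 1) := by
      intro i hi
      have hle : (v - w i).val ≤ (ρ i - w i).val := by
        rcases mem_union.1 hi with hi | hi
        · simp_all
        · exact (mem_filter.1 hi).2.2
      rcases hle.eq_or_lt with heq | hlt
      · refine mem_union_left _ (mem_filter.2 ⟨mem_univ _, ?_⟩)
        exact (sub_left_inj.1 (ZMod.val_injective n heq)).symm
      · have hval : (v + 1 - w i).val = (v - w i).val + 1 := by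
          have := ZMod.val_lt (ρ i - w i)
          rw [add_sub_right_comm, ZMod.val_add_one_of_lt (by omega)]
        exact mem_union_right _ (mem_filter.2 ⟨mem_univ _, by omega, by omega⟩)
    calc #{i | w i = v} + #(arcsInto v) = #(({i | w i = v} : Finset ι) ∪ arcsInto v) :=
          (card_union_of_disjoint hdisj).symm
      _ ≤ #(({i | ρ i = v} : Finset ι) ∪ arcsInto (v + 1)) := card_le_card hsub
      _ ≤ #({i | ρ i = v} : Finset ι) + #(arcsInto (v + 1)) := card_union_le _ _
      _ ≤ 1 + #(arcsInto (v + 1)) := by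
          gcongr
          exact card_le_one.2 fun i hi j hj =>
            hρ ((mem_filter.1 hi).2.trans (mem_filter.1 hj).2.symm)

theorem exists_rank_lt_card_fiber [LinearOrder ι] {α : Type*} [DecidableEq α] (w : ι → α) :
    ∃ r : ι → ℕ, (∀ i, r i < #{j | w j = w i}) ∧ ∀ i j, w i = w j → r i = r j → i = j := by
  let r (i : ι) : ℕ := #{j | w j = w i ∧ j < i}
  have hr_lt (i) : r i < #{j | w j = w i} :=
    card_lt_card <| (ssubset_iff_of_subset fun j hj => by simp_all).2 ⟨i, by simp, by simp⟩
  have hr_strictMono {i j : ι} (hij : i < j) (hw : w i = w j) : r i < r j :=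
    card_lt_card <| (ssubset_iff_of_subset fun k hk => by
      simp only [mem_filter, mem_univ, true_and] at hk ⊢
      exact ⟨hk.1.trans hw, hk.2.trans hij⟩).2
      ⟨i, by simp [hw, hij], by simp⟩
  refine ⟨r, hr_lt, fun i j hw hr => ?_⟩
  rcases lt_trichotomy i j with hij | hij | hij
  · exact absurd hr (hr_strictMono hij hw).ne
  · exact hij
  · exact absurd hr (hr_strictMono hij hw.symm).ne'

theorem exists_injective_of_isCarry [NeZero n] [LinearOrder ι] {ℓ : ℕ} (hℓ₀ : 0 < ℓ) (hℓ : ℓ ≤ n)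
    {w : ι → ZMod n} {c : ZMod n → ℕ} (hc : IsCarry ℓ w c) :
    ∃ ρ : ι → ZMod n, Injective ρ ∧ ∀ i, (ρ i - w i).val < ℓ := by
  obtain ⟨hcℓ, hbal⟩ := hc
  obtain ⟨r, hr, hr_inj⟩ := exists_rank_lt_card_fiber w
  -- Lifted to `ℕ`, the fiber over `a < n` is placed on `[S a, S a + #fiber)`; these blocks are
  -- disjoint and all lie in `[S 0, S 0 + n)`, on which reduction mod `n` is injective.
  let S (a : ℕ) : ℕ := a + c a
  have hS_succ (a : ℕ) : S a + #{i | w i = (a : ZMod n)} ≤ S (a + 1) := by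
    have := hbal a
    simp only [S, Nat.cast_succ]
    omega
  have hS_mono : Monotone S :=
    monotone_nat_of_le_succ fun a => (Nat.le_add_right _ _).trans (hS_succ a)
  let pos (i : ι) : ℕ := S (w i).val + r i
  have hpos_lt (i : ι) : pos i < S ((w i).val + 1) := by
    have := hr i
    have := hS_succ (w i).val
    rw [ZMod.natCast_zmod_val] at this
    simp only [pos]
    omega
  have hpos_mem (i : ι) : pos i ∈ Set.Ico (S 0) (S 0 + n) := by
    have hSn : S n = S 0 + n := by simp [S, add_comm]
    exact ⟨(hS_mono (Nat.zero_le _)).trans (Nat.le_add_right _ _),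
      hSn ▸ (hpos_lt i).trans_le (hS_mono (ZMod.val_lt (w i)))⟩
  have hpos_inj : Injective pos := by
    have hlt {i j : ι} (h : (w i).val < (w j).val) : pos i < pos j :=
      (hpos_lt i).trans_le ((hS_mono h).trans (Nat.le_add_right _ _))
    intro i j h
    have hval : (w i).val = (w j).val := by
      rcases lt_trichotomy (w i).val (w j).val with h' | h' | h'
      · exact absurd h (hlt h').ne
      · exact h'
      · exact absurd h (hlt h').ne'
    simp only [pos, hval, add_left_cancel_iff] at h
    exact hr_inj i j (ZMod.val_injective n hval) h
  refine ⟨fun i => (pos i : ZMod n),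
    fun i j h => hpos_inj (ZMod.natCast_injOn_Ico _ (hpos_mem i) (hpos_mem j) h), fun i => ?_⟩
  have hoffset : c (w i) + r i < ℓ := by
    have := hbal (w i)
    have := hcℓ (w i + 1)
    have := hr i
    omega
  have hsub : (pos i : ZMod n) - w i = ((c (w i) + r i : ℕ) : ZMod n) := by
    simp only [pos, S, ZMod.natCast_zmod_val]
    push_cast
    rw [ZMod.natCast_zmod_val]
    ring
  rwa [hsub, ZMod.val_cast_of_lt (hoffset.trans_le hℓ)]

end

theorem stmt_4_general (n ℓ m : ℕ) [NeZero n] (hn : ℓ ≤ n) (hℓ : 2 ≤ ℓ)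
    (e : Fin m → Multiset (ZMod n)) :
    Orientable (V := ZMod n)
      (fun i : Fin m => (e i).toFinset.biUnion (fun j =>
        (Finset.range ℓ).image (fun p : ℕ => (j + (p : ZMod n)))))
      (fun _ => 1) (fun _ => 1)
    ↔ Orientable (V := ZMod n) (E := Fin m ⊕ ZMod n)
        (Sum.elim (fun i : Fin m => (e i).toFinset)
          (fun i : ZMod n => ({i, i + 1} : Finset (ZMod n))))
        (fun _ => ℓ)
        (Sum.elim (fun _ => 1) (fun _ => ℓ - 1)) := by
  have : Fact (1 < n) := ⟨by omega⟩
  rw [orientable_unit_iff, orientable_helper_iff (by omega)]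
  simp only [mem_biUnion, ZMod.mem_image_range_add_iff hn]
  constructor
  · rintro ⟨ρ, hρ, hmem⟩
    choose w hw hwin using hmem
    exact ⟨w, hw, exists_isCarry_of_injective w ρ hρ hwin⟩
  · rintro ⟨w, hw, c, hc⟩
    obtain ⟨ρ, hρ, hwin⟩ := exists_injective_of_isCarry (by omega) hn hc
    exact ⟨ρ, hρ, fun i => ⟨w i, hw i, hwin i⟩⟩

/-- `W` (cyclic windows of size ℓ, unit capacities) is orientable iff
the weighted hypergraph `Ŵ` (ordinary edges of weight 1, helper edges `{i,i+1}` of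
weight ℓ-1, vertex weight ℓ) is orientable. -/
theorem stmt_4 (n ℓ k m : ℕ) [NeZero n] (hn : ℓ ≤ n) (hℓ : 2 ≤ ℓ) (hk : 2 ≤ k)
    (e : Fin m → Multiset (ZMod n))
    (hcard : ∀ i, Multiset.card (e i) = k) :
    Orientable (V := ZMod n)
      (fun i : Fin m => (e i).toFinset.biUnion (fun j =>
        (Finset.range ℓ).image (fun p : ℕ => (j + (p : ZMod n)))))
      (fun _ => 1) (fun _ => 1)
    ↔ Orientable (V := ZMod n) (E := Fin m ⊕ ZMod n)
        (Sum.elim (fun i : Fin m => (e i).toFinset)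
          (fun i : ZMod n => ({i, i + 1} : Finset (ZMod n))))
        (fun _ => ℓ)
        (Sum.elim (fun _ => 1) (fun _ => ℓ - 1)) :=
  stmt_4_general n ℓ m hn hℓ e
end

section
/- With the setup of the previous statement (maximum allocation $\mu$, unsaturated $a\in A$, alternating-reachable sets $Y\subseteq A$, $X\subseteq B$), the total weight of $Y$ strictly exceeds the total weight of $X$: $\sum_{y\in Y}\eta(y) > \sum_{x\in X}\eta(x)$. -/
open scoped Classical

/-- Alternating reachability in a bipartite weighted graph: `a'` is reachable
from `a0` via a path `(a0, b₁, a₁, b₂, a₂, …)` using arbitrary edges forward and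
edges with positive allocation value backward. -/
inductive AltReach {A B : Type*} (adj : A → B → Prop) (μ : A → B → ℕ) (a0 : A) : A → Prop
  | base : AltReach adj μ a0 a0
  | step {a : A} {b : B} {a' : A} :
      AltReach adj μ a0 a → adj a b → adj a' b → 0 < μ a' b → AltReach adj μ a0 a'

/-- Length-indexed alternating reachability. -/
inductive AltReachN {A B : Type*} (adj : A → B → Prop) (μ : A → B → ℕ) (a0 : A) : ℕ → A → Prop
  | base : AltReachN adj μ a0 0 a0
  | step {n : ℕ} {a : A} {b : B} {a' : A} :
      AltReachN adj μ a0 n a → adj a b → adj a' b → 0 < μ a' b → AltReachN adj μ a0 (n + 1) a'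

lemma altReach_iff_exists {A B : Type*} {adj : A → B → Prop} {μ : A → B → ℕ} {a0 a : A} :
    AltReach adj μ a0 a ↔ ∃ n, AltReachN adj μ a0 n a := by
  constructor
  · intro h
    induction h with
    | base => exact ⟨0, AltReachN.base⟩
    | step h hab ha'b hpos ih =>
        obtain ⟨n, hn⟩ := ih
        exact ⟨n + 1, AltReachN.step hn hab ha'b hpos⟩
  · rintro ⟨n, hn⟩
    induction hn with
    | base => exact AltReach.base
    | step h hab ha'b hpos ih => exact AltReach.step ih hab ha'b hpos

/-- Either a derivation never uses the backward edge `(a, b1)`, in which case it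
survives any modification that only decreases `ν` at `(a, b1)`, or `a` itself is
reachable within the same length. -/
lemma altReachN_split {A B : Type*} {adj : A → B → Prop} {ν : A → B → ℕ} {a0 : A}
    {n : ℕ} {c : A} (h : AltReachN adj ν a0 n c) (a : A) (b1 : B) (ν' : A → B → ℕ)
    (hmono : ∀ x y, ¬(x = a ∧ y = b1) → 0 < ν x y → 0 < ν' x y) :
    (∃ k ≤ n, AltReachN adj ν a0 k a) ∨ AltReachN adj ν' a0 n c := by
  induction h with
  | base => exact Or.inr AltReachN.base
  | @step m x y x' h hxy hx'y hpos ih =>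
      rcases ih with ⟨k, hk, hr⟩ | hr
      · exact Or.inl ⟨k, hk.trans (Nat.le_succ _), hr⟩
      · by_cases hc : x' = a ∧ y = b1
        · exact Or.inl ⟨m + 1, le_refl _, hc.1 ▸ AltReachN.step h hxy hx'y hpos⟩
        · exact Or.inr (AltReachN.step hr hxy hx'y (hmono _ _ hc hpos))

lemma sum_split_one {β : Type*} [Fintype β] (g : β → ℕ) (b : β) :
    ∑ y, g y = ∑ y ∈ Finset.univ.erase b, g y + g b :=
  (Finset.sum_erase_add _ _ (Finset.mem_univ b)).symm

lemma sum_inc {β : Type*} [Fintype β] (g g' : β → ℕ) (b : β)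
    (h : g' b = g b + 1) (ho : ∀ y, y ≠ b → g' y = g y) :
    ∑ y, g' y = ∑ y, g y + 1 := by
  rw [sum_split_one g' b, sum_split_one g b]
  have he : ∑ y ∈ Finset.univ.erase b, g' y = ∑ y ∈ Finset.univ.erase b, g y :=
    Finset.sum_congr rfl (fun y hy => ho y (Finset.ne_of_mem_erase hy))
  omega

lemma sum_dec {β : Type*} [Fintype β] (g g' : β → ℕ) (b : β)
    (h : g' b + 1 = g b) (ho : ∀ y, y ≠ b → g' y = g y) :
    ∑ y, g' y + 1 = ∑ y, g y := by
  rw [sum_split_one g' b, sum_split_one g b]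
  have he : ∑ y ∈ Finset.univ.erase b, g' y = ∑ y ∈ Finset.univ.erase b, g y :=
    Finset.sum_congr rfl (fun y hy => ho y (Finset.ne_of_mem_erase hy))
  omega

lemma sum_shift {β : Type*} [Fintype β] (g g' : β → ℕ) (b b1 : β) (hne : b ≠ b1)
    (h1 : g' b = g b + 1) (h2 : g' b1 + 1 = g b1)
    (ho : ∀ y, y ≠ b → y ≠ b1 → g' y = g y) :
    ∑ y, g' y = ∑ y, g y := by
  have hb1 : b1 ∈ Finset.univ.erase b :=
    Finset.mem_erase.mpr ⟨fun h => hne h.symm, Finset.mem_univ _⟩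
  have key : ∀ f : β → ℕ,
      ∑ y, f y = ∑ y ∈ (Finset.univ.erase b).erase b1, f y + f b1 + f b := by
    intro f
    rw [← Finset.sum_erase_add _ f (Finset.mem_univ b), ← Finset.sum_erase_add _ f hb1]
  rw [key g, key g']
  have he : ∑ y ∈ (Finset.univ.erase b).erase b1, g' y
      = ∑ y ∈ (Finset.univ.erase b).erase b1, g y :=
    Finset.sum_congr rfl (fun y hy => ho y
      (Finset.ne_of_mem_erase (Finset.mem_of_mem_erase hy)) (Finset.ne_of_mem_erase hy))
  omega

/-- Key augmenting-path lemma: with a maximum allocation `μ` and an unsaturated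
`a0`, no allocation `ν` with the same row sums can have an alternating-reachable
vertex adjacent to an unsaturated column. -/
lemma key_lemma {A B : Type*} [Fintype A] [Fintype B]
    (adj : A → B → Prop) (ηA : A → ℕ) (ηB : B → ℕ) (μ : A → B → ℕ)
    (hallocA : ∀ a, ∑ b, μ a b ≤ ηA a)
    (hmax : ∀ μ' : A → B → ℕ, (∀ a b, ¬ adj a b → μ' a b = 0) →
      (∀ a, ∑ b, μ' a b ≤ ηA a) → (∀ b, ∑ a, μ' a b ≤ ηB b) →
      ∑ a, ∑ b, μ' a b ≤ ∑ a, ∑ b, μ a b)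
    (a0 : A) (hunsat : ∑ b, μ a0 b < ηA a0) :
    ∀ n (ν : A → B → ℕ), (∀ a b, ¬ adj a b → ν a b = 0) → (∀ b, ∑ a, ν a b ≤ ηB b) →
      (∀ a, ∑ b, ν a b = ∑ b, μ a b) →
      ∀ a b, AltReachN adj ν a0 n a → adj a b → ∑ a', ν a' b < ηB b → False := by
  intro n
  induction n using Nat.strong_induction_on with
  | _ n IH =>
    intro ν hs hB hrow a b hreach hab hcol
    cases hreach with
    | base =>
        -- augment directly: add one unit on edge (a0, b)
        set ν1 : A → B → ℕ := fun x y => ν x y + if x = a0 ∧ y = b then 1 else 0 with hν1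
        have hrow1 : ∀ x, ∑ y, ν1 x y = ∑ y, ν x y + if x = a0 then 1 else 0 := by
          intro x
          by_cases hx : x = a0
          · subst hx
            refine sum_inc (ν x) (ν1 x) b ?_ ?_ |>.trans (by simp)
            · simp [hν1]
            · intro y hy; simp [hν1, hy]
          · simp only [hx, if_false, add_zero]
            refine Finset.sum_congr rfl fun y _ => ?_
            simp [hν1, hx]
        have hcol1 : ∀ y, ∑ x, ν1 x y = ∑ x, ν x y + if y = b then 1 else 0 := by
          intro y
          by_cases hy : y = b
          · subst hy
            refine sum_inc (fun x => ν x y) (fun x => ν1 x y) a0 ?_ ?_ |>.trans (by simp)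
            · simp [hν1]
            · intro x hx; simp [hν1, hx]
          · simp only [hy, if_false, add_zero]
            refine Finset.sum_congr rfl fun x _ => ?_
            simp [hν1, hy]
        have hs1 : ∀ x y, ¬ adj x y → ν1 x y = 0 := by
          intro x y hxy
          have h0 := hs x y hxy
          by_cases hc : x = a0 ∧ y = b
          · exact absurd (hc.1 ▸ hc.2 ▸ hab) hxy
          · simp [hν1, hc, h0]
        have hA1 : ∀ x, ∑ y, ν1 x y ≤ ηA x := by
          intro x
          rw [hrow1 x]
          by_cases hx : x = a0
          · rw [if_pos hx, hx]
            have := hrow a0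
            omega
          · rw [if_neg hx, add_zero, hrow x]
            exact hallocA x
        have hB1 : ∀ y, ∑ x, ν1 x y ≤ ηB y := by
          intro y
          rw [hcol1 y]
          by_cases hy : y = b
          · rw [if_pos hy, hy]; omega
          · rw [if_neg hy, add_zero]; exact hB y
        have htot : ∑ x, ∑ y, ν1 x y = ∑ x, ∑ y, μ x y + 1 := by
          calc ∑ x, ∑ y, ν1 x y = ∑ x, (∑ y, ν x y + if x = a0 then 1 else 0) :=
                Finset.sum_congr rfl fun x _ => hrow1 x
            _ = ∑ x, ∑ y, ν x y + 1 := by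
                rw [Finset.sum_add_distrib]
                simp
            _ = ∑ x, ∑ y, μ x y + 1 := by
                rw [Finset.sum_congr rfl fun x _ => hrow x]
        have := hmax ν1 hs1 hA1 hB1
        omega
    | @step m a1 b1 _ h1 hxy hab1 hpos =>
        -- a1 is reachable in m steps, adj a1 b1, adj a b1, 0 < ν a b1
        by_cases hcb1 : ∑ a', ν a' b1 < ηB b1
        · exact IH m (Nat.lt_succ_self _) ν hs hB hrow a1 b1 h1 hxy hcb1
        · have hbb1 : b ≠ b1 := by
            intro h; rw [h] at hcol; exact hcb1 hcol
          set ν' : A → B → ℕ := fun x y =>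
            if x = a ∧ y = b1 then ν x y - 1
            else if x = a ∧ y = b then ν x y + 1 else ν x y with hν'
          have hν'ab1 : ν' a b1 = ν a b1 - 1 := by simp [hν']
          have hν'ab : ν' a b = ν a b + 1 := by simp [hν', hbb1]
          have hν'x : ∀ x y, x ≠ a → ν' x y = ν x y := by
            intro x y hx; simp [hν', hx]
          have hν'y : ∀ y, y ≠ b → y ≠ b1 → ν' a y = ν a y := by
            intro y h1 h2; simp [hν', h1, h2]
          have hmono : ∀ x y, ¬(x = a ∧ y = b1) → 0 < ν x y → 0 < ν' x y := by
            intro x y hne hp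
            simp only [hν', if_neg hne]
            split <;> omega
          rcases altReachN_split h1 a b1 ν' hmono with ⟨k, hk, hr⟩ | hr
          · exact IH k (lt_of_le_of_lt hk (Nat.lt_succ_self m)) ν hs hB hrow a b hr hab hcol
          · -- use ν' : move one unit from (a, b1) to (a, b)
            have hs' : ∀ x y, ¬ adj x y → ν' x y = 0 := by
              intro x y hxy'
              have h0 := hs x y hxy'
              by_cases hc1 : x = a ∧ y = b1
              · exact absurd (hc1.1 ▸ hc1.2 ▸ hab1) hxy'
              · by_cases hc2 : x = a ∧ y = b
                · exact absurd (hc2.1 ▸ hc2.2 ▸ hab) hxy'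
                · simp [hν', hc1, hc2, h0]
            have hrow' : ∀ x, ∑ y, ν' x y = ∑ y, μ x y := by
              intro x
              by_cases hx : x = a
              · rw [← hrow x]
                refine sum_shift (ν x) (ν' x) b b1 hbb1 ?_ ?_ ?_
                · rw [hx, hν'ab]
                · rw [hx, hν'ab1]
                  omega
                · intro y hyb hyb1
                  rw [hx]
                  exact hν'y y hyb hyb1
              · rw [← hrow x]
                exact Finset.sum_congr rfl fun y _ => hν'x x y hx
            have hcoldec : ∑ x, ν' x b1 + 1 = ∑ x, ν x b1 := by
              refine sum_dec (fun x => ν x b1) (fun x => ν' x b1) a ?_ ?_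
              · show ν' a b1 + 1 = ν a b1
                rw [hν'ab1]
                omega
              · intro x hx; exact hν'x x b1 hx
            have hcolinc : ∑ x, ν' x b = ∑ x, ν x b + 1 := by
              refine sum_inc (fun x => ν x b) (fun x => ν' x b) a ?_ ?_
              · exact hν'ab
              · intro x hx; exact hν'x x b hx
            have hB' : ∀ y, ∑ x, ν' x y ≤ ηB y := by
              intro y
              by_cases hy1 : y = b1
              · rw [hy1]
                have := hB b1
                omega
              · by_cases hy : y = b
                · rw [hy]
                  omega
                · have he : ∑ x, ν' x y = ∑ x, ν x y :=
                    Finset.sum_congr rfl fun x _ => by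
                      rcases eq_or_ne x a with hx | hx
                      · rw [hx]; exact hν'y y hy hy1
                      · exact hν'x x y hx
                  rw [he]; exact hB y
            have hcol' : ∑ x, ν' x b1 < ηB b1 := by
              have := hB b1
              omega
            exact IH m (Nat.lt_succ_self _) ν' hs' hB' hrow' a1 b1 hr hxy hcol'

/-- With a maximum allocation `μ` and an unsaturated `a0 ∈ A`, the
total weight of the alternating-reachable set `Y ⊆ A` strictly exceeds the total
weight of the alternating-reachable set `X ⊆ B`. -/
theorem stmt_15 {A B : Type*} [Fintype A] [Fintype B]
    (adj : A → B → Prop) (ηA : A → ℕ) (ηB : B → ℕ)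
    (μ : A → B → ℕ) (hsupp : ∀ a b, ¬ adj a b → μ a b = 0)
    (hallocA : ∀ a, ∑ b, μ a b ≤ ηA a) (hallocB : ∀ b, ∑ a, μ a b ≤ ηB b)
    (hmax : ∀ μ' : A → B → ℕ, (∀ a b, ¬ adj a b → μ' a b = 0) →
      (∀ a, ∑ b, μ' a b ≤ ηA a) → (∀ b, ∑ a, μ' a b ≤ ηB b) →
      ∑ a, ∑ b, μ' a b ≤ ∑ a, ∑ b, μ a b)
    (a0 : A) (hunsat : ∑ b, μ a0 b < ηA a0) :
    ∑ x ∈ Finset.univ.filter (fun b : B => ∃ a, AltReach adj μ a0 a ∧ adj a b), ηB x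
      < ∑ y ∈ Finset.univ.filter (fun a : A => AltReach adj μ a0 a), ηA y := by
  classical
  set X := Finset.univ.filter (fun b : B => ∃ a, AltReach adj μ a0 a ∧ adj a b) with hX
  set Y := Finset.univ.filter (fun a : A => AltReach adj μ a0 a) with hY
  have hmemX : ∀ b, b ∈ X ↔ ∃ a, AltReach adj μ a0 a ∧ adj a b := by
    intro b; simp [hX]
  have hmemY : ∀ a, a ∈ Y ↔ AltReach adj μ a0 a := by
    intro a; simp [hY]
  -- every column in X is saturated
  have hsat : ∀ b ∈ X, ∑ a, μ a b = ηB b := by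
    intro b hb
    obtain ⟨a, ha, hab⟩ := (hmemX b).mp hb
    by_contra hne
    have hlt : ∑ a, μ a b < ηB b := lt_of_le_of_ne (hallocB b) hne
    obtain ⟨n, hn⟩ := altReach_iff_exists.mp ha
    exact key_lemma adj ηA ηB μ hallocA hmax a0 hunsat n μ hsupp hallocB
      (fun _ => rfl) a b hn hab hlt
  -- positive entries in a column of X come from rows in Y
  have hcolY : ∀ b ∈ X, ∀ a, a ∉ Y → μ a b = 0 := by
    intro b hb a haY
    by_contra hne
    have hpos : 0 < μ a b := Nat.pos_of_ne_zero hne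
    have hadj : adj a b := by
      by_contra hadj; exact hne (hsupp a b hadj)
    obtain ⟨a1, ha1, ha1b⟩ := (hmemX b).mp hb
    exact haY ((hmemY a).mpr (AltReach.step ha1 ha1b hadj hpos))
  -- positive entries in a row of Y go to columns in X
  have hrowX : ∀ a ∈ Y, ∀ b, b ∉ X → μ a b = 0 := by
    intro a haY b hbX
    by_contra hne
    have hadj : adj a b := by
      by_contra hadj; exact hne (hsupp a b hadj)
    exact hbX ((hmemX b).mpr ⟨a, (hmemY a).mp haY, hadj⟩)
  have ha0Y : a0 ∈ Y := (hmemY a0).mpr AltReach.base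
  calc ∑ x ∈ X, ηB x = ∑ x ∈ X, ∑ a, μ a x :=
        (Finset.sum_congr rfl fun x hx => (hsat x hx).symm)
    _ = ∑ x ∈ X, ∑ a ∈ Y, μ a x := by
        refine Finset.sum_congr rfl fun x hx => ?_
        exact (Finset.sum_subset (Finset.subset_univ Y)
          (fun a _ haY => hcolY x hx a haY)).symm
    _ = ∑ a ∈ Y, ∑ x ∈ X, μ a x := Finset.sum_comm
    _ = ∑ a ∈ Y, ∑ x, μ a x := by
        refine Finset.sum_congr rfl fun a ha => ?_
        exact Finset.sum_subset (Finset.subset_univ X) (fun b _ hbX => hrowX a ha b hbX)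
    _ < ∑ a ∈ Y, ηA a :=
        Finset.sum_lt_sum (fun a _ => hallocA a) ⟨a0, ha0Y, hunsat⟩
end
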